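/- For every m ≥ 1, the direct product K_{1,2} × P_{2m+2} is antimagic. Explicitly, the edge labeling f with f(a_0^j v_0)=2+j, f(b_0^j u_0)=j for j=1,2; f(b_i^j u_{i-1})=3+2i+4m(j-1), f(b_i^j u_i)=4+2i+4m(j-1), f(a_i^j v_{i-1})=3+2i+2m(2j-1), f(a_i^j v_i)=4+2i+2m(2j-1) for 1 ≤ i ≤ m, j=1,2, is a bijection onto {1,...,8m+4} with all vertex sums distinct. -/

import Mathlib

open SimpleGraph

/-- The direct (tensor) product of two simple graphs. -/
def tensorProd {α β : Type*} (G : SimpleGraph α) (H : SimpleGraph β) :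
    SimpleGraph (α × β) where
  Adj x y := G.Adj x.1 y.1 ∧ H.Adj x.2 y.2
  symm := ⟨fun _ _ h => ⟨h.1.symm, h.2.symm⟩⟩
  loopless := ⟨fun _ h => G.irrefl h.1⟩

/-- The star `K_{1,s}`. -/
def starGraph (s : ℕ) : SimpleGraph (Fin 1 ⊕ Fin s) :=
  completeBipartiteGraph (Fin 1) (Fin s)

open scoped Classical in
/-- The vertex sum (weight) of `v` under an edge labeling `f`. -/
noncomputable def vertexSum {V : Type*} [Fintype V] (G : SimpleGraph V)
    (f : Sym2 V → ℕ) (v : V) : ℕ :=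
  ∑ e ∈ G.edgeFinset, if v ∈ e then f e else 0

open scoped Classical in
/-- A graph is antimagic if some bijection from its edge set onto
`{1, …, |E|}` yields pairwise distinct vertex sums. -/
def IsAntimagic {V : Type*} [Fintype V] (G : SimpleGraph V) : Prop :=
  ∃ f : Sym2 V → ℕ,
    Set.BijOn f G.edgeSet (Set.Icc 1 G.edgeFinset.card) ∧
    Function.Injective (vertexSum G f)


/-- Vertices of `K_{1,2} × P_{2m+2}`: `a_i^j, b_i^j, v_i, u_i` for
`0 ≤ i ≤ m`, `j ∈ {1, 2}` (here `j : Fin 2` codes `j+1`). -/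
inductive V8 (m : ℕ) where
  | a (i : Fin (m + 1)) (j : Fin 2)
  | b (i : Fin (m + 1)) (j : Fin 2)
  | v (i : Fin (m + 1))
  | u (i : Fin (m + 1))
  deriving DecidableEq, Fintype

/-- The graph `K_{1,2} × P_{2m+2}` with edges
`a_i^j v_i`, `b_i^j u_i` (`0 ≤ i ≤ m`) and `a_i^j v_{i-1}`, `b_i^j u_{i-1}`
(`1 ≤ i ≤ m`). -/
def G8 (m : ℕ) : SimpleGraph (V8 m) :=
  SimpleGraph.fromRel (fun x y =>
    match x, y with
    | .a i _, .v k => k = i ∨ i.1 = k.1 + 1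
    | .b i _, .u k => k = i ∨ i.1 = k.1 + 1
    | _, _ => False)

/-- One-sided description of the labeling of Lemma 2.2:
`f(a_0^j v_0) = 2 + j`, `f(b_0^j u_0) = j` for `j = 1, 2`, and for
`1 ≤ i ≤ m`, `j = 1, 2`:
`f(b_i^j u_{i-1}) = 3 + 2i + 4m(j−1)`, `f(b_i^j u_i) = 4 + 2i + 4m(j−1)`,
`f(a_i^j v_{i-1}) = 3 + 2i + 2m(2j−1)`, `f(a_i^j v_i) = 4 + 2i + 2m(2j−1)`. -/
def g8 (m : ℕ) : V8 m → V8 m → ℕ := fun x y =>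
  match x, y with
  | .a i j, .v k =>
      if k = i then
        (if i.1 = 0 then 2 + (j.1 + 1)
         else 4 + 2 * i.1 + 2 * m * (2 * (j.1 + 1) - 1))
      else if i.1 = k.1 + 1 then 3 + 2 * i.1 + 2 * m * (2 * (j.1 + 1) - 1)
      else 0
  | .b i j, .u k =>
      if k = i then
        (if i.1 = 0 then j.1 + 1
         else 4 + 2 * i.1 + 4 * m * ((j.1 + 1) - 1))
      else if i.1 = k.1 + 1 then 3 + 2 * i.1 + 4 * m * ((j.1 + 1) - 1)
      else 0
  | _, _ => 0

/-- The labeling as a function on unordered pairs. -/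
def f8 (m : ℕ) : Sym2 (V8 m) → ℕ :=
  Sym2.lift ⟨fun x y => g8 m x y + g8 m y x, fun x y => by
    simp [Nat.add_comm]⟩

section Test
variable {m : ℕ}

lemma f8_av (i k : Fin (m+1)) (j : Fin 2) :
    f8 m s(V8.a i j, V8.v k) =
      if k = i then
        (if i.1 = 0 then 2 + (j.1 + 1)
         else 4 + 2 * i.1 + 2 * m * (2 * (j.1 + 1) - 1))
      else if i.1 = k.1 + 1 then 3 + 2 * i.1 + 2 * m * (2 * (j.1 + 1) - 1)
      else 0 := by
  simp [f8, g8]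

lemma f8_bu (i k : Fin (m+1)) (j : Fin 2) :
    f8 m s(V8.b i j, V8.u k) =
      if k = i then
        (if i.1 = 0 then j.1 + 1
         else 4 + 2 * i.1 + 4 * m * ((j.1 + 1) - 1))
      else if i.1 = k.1 + 1 then 3 + 2 * i.1 + 4 * m * ((j.1 + 1) - 1)
      else 0 := by
  simp [f8, g8]

lemma adj_iff (x y : V8 m) : (G8 m).Adj x y ↔ x ≠ y ∧
    ((match x, y with
    | .a i _, .v k => k = i ∨ i.1 = k.1 + 1
    | .b i _, .u k => k = i ∨ i.1 = k.1 + 1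
    | _, _ => False) ∨
    (match y, x with
    | .a i _, .v k => k = i ∨ i.1 = k.1 + 1
    | .b i _, .u k => k = i ∨ i.1 = k.1 + 1
    | _, _ => False)) := by
  rw [G8, SimpleGraph.fromRel_adj]

lemma edge_cases {e : Sym2 (V8 m)} (he : e ∈ (G8 m).edgeSet) :
    ∃ (i k : Fin (m+1)) (j : Fin 2), (k = i ∨ i.1 = k.1 + 1) ∧
      (e = s(V8.a i j, V8.v k) ∨ e = s(V8.b i j, V8.u k)) := by
  induction e using Sym2.ind with
  | _ x y =>
    rw [SimpleGraph.mem_edgeSet, adj_iff] at he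
    obtain ⟨hne, h | h⟩ := he <;>
      cases x <;> cases y <;> simp only at h
    · exact ⟨_, _, _, h, Or.inl rfl⟩
    · exact ⟨_, _, _, h, Or.inr rfl⟩
    · exact ⟨_, _, _, h, Or.inl (Sym2.eq_swap)⟩
    · exact ⟨_, _, _, h, Or.inr (Sym2.eq_swap)⟩


lemma mem_edge_av (i k : Fin (m+1)) (j : Fin 2) (h : k = i ∨ i.1 = k.1 + 1) :
    s(V8.a i j, V8.v k) ∈ (G8 m).edgeSet := by
  rw [SimpleGraph.mem_edgeSet, adj_iff]
  exact ⟨by simp, Or.inl h⟩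

lemma mem_edge_bu (i k : Fin (m+1)) (j : Fin 2) (h : k = i ∨ i.1 = k.1 + 1) :
    s(V8.b i j, V8.u k) ∈ (G8 m).edgeSet := by
  rw [SimpleGraph.mem_edgeSet, adj_iff]
  exact ⟨by simp, Or.inl h⟩

lemma f8_av_fwd (i : Fin (m+1)) (j : Fin 2) (h : i.1 ≠ 0) :
    f8 m s(V8.a i j, V8.v i) = 4 + 2 * i.1 + 2 * m * (2 * (j.1 + 1) - 1) := by
  rw [f8_av, if_pos rfl, if_neg h]

lemma f8_av_fwd0 (i : Fin (m+1)) (j : Fin 2) (h : i.1 = 0) :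
    f8 m s(V8.a i j, V8.v i) = 3 + j.1 := by
  rw [f8_av, if_pos rfl, if_pos h]; omega

lemma f8_av_bwd (i k : Fin (m+1)) (j : Fin 2) (h : i.1 = k.1 + 1) :
    f8 m s(V8.a i j, V8.v k) = 3 + 2 * i.1 + 2 * m * (2 * (j.1 + 1) - 1) := by
  rw [f8_av, if_neg (by rintro rfl; omega), if_pos h]

lemma f8_bu_fwd (i : Fin (m+1)) (j : Fin 2) (h : i.1 ≠ 0) :
    f8 m s(V8.b i j, V8.u i) = 4 + 2 * i.1 + 4 * m * j.1 := by
  rw [f8_bu, if_pos rfl, if_neg h]; simp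

lemma f8_bu_fwd0 (i : Fin (m+1)) (j : Fin 2) (h : i.1 = 0) :
    f8 m s(V8.b i j, V8.u i) = 1 + j.1 := by
  rw [f8_bu, if_pos rfl, if_pos h]; omega

lemma f8_bu_bwd (i k : Fin (m+1)) (j : Fin 2) (h : i.1 = k.1 + 1) :
    f8 m s(V8.b i j, V8.u k) = 3 + 2 * i.1 + 4 * m * j.1 := by
  rw [f8_bu, if_neg (by rintro rfl; omega), if_pos h]; simp
open Finset in
open scoped Classical in
lemma vertexSum_eq_nbrs {V : Type*} [Fintype V] (G : SimpleGraph V)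
    (f : Sym2 V → ℕ) (v : V) :
    vertexSum G f v = ∑ w ∈ G.neighborFinset v, f s(v, w) := by
  unfold vertexSum
  rw [← Finset.sum_filter]
  have himg : (G.edgeFinset.filter (fun e => v ∈ e)) =
      (G.neighborFinset v).image (fun w => s(v, w)) := by
    ext e
    induction e using Sym2.ind with
    | _ x y =>
      simp only [mem_filter, SimpleGraph.mem_edgeFinset, mem_image,
        SimpleGraph.mem_neighborFinset, Sym2.mem_iff, SimpleGraph.mem_edgeSet]
      constructor
      · rintro ⟨hadj, rfl | rfl⟩
        · exact ⟨y, hadj, rfl⟩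
        · exact ⟨x, hadj.symm, Sym2.eq_swap⟩
      · rintro ⟨w, hw, he⟩
        rcases Sym2.eq_iff.mp he with ⟨rfl, rfl⟩ | ⟨rfl, rfl⟩
        · exact ⟨hw, Or.inl rfl⟩
        · exact ⟨hw.symm, Or.inr rfl⟩
  rw [himg, Finset.sum_image (fun w1 _ w2 _ h => Sym2.congr_right.mp h)]
open scoped Classical in
lemma nbr_a (i : Fin (m+1)) (j : Fin 2) :
    (G8 m).neighborFinset (V8.a i j) =
      if i.1 = 0 then {V8.v i} else {V8.v i, V8.v ⟨i.1 - 1, by omega⟩} := by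
  ext w
  rw [SimpleGraph.mem_neighborFinset, adj_iff]
  cases w <;> split_ifs with h0 <;>
    simp [Fin.ext_iff] <;> omega

open scoped Classical in
lemma nbr_b (i : Fin (m+1)) (j : Fin 2) :
    (G8 m).neighborFinset (V8.b i j) =
      if i.1 = 0 then {V8.u i} else {V8.u i, V8.u ⟨i.1 - 1, by omega⟩} := by
  ext w
  rw [SimpleGraph.mem_neighborFinset, adj_iff]
  cases w <;> split_ifs with h0 <;>
    simp [Fin.ext_iff] <;> omega

open scoped Classical in
lemma nbr_v (k : Fin (m+1)) :
    (G8 m).neighborFinset (V8.v k) =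
      if hk : k.1 < m then
        {V8.a k 0, V8.a k 1, V8.a ⟨k.1+1, by omega⟩ 0, V8.a ⟨k.1+1, by omega⟩ 1}
      else {V8.a k 0, V8.a k 1} := by
  ext w
  rw [SimpleGraph.mem_neighborFinset, adj_iff]
  cases w with
  | a i' j' =>
    have h2 := j'.isLt
    have hk2 := k.isLt
    have hi2 := i'.isLt
    split_ifs with h0 <;> simp only [Finset.mem_insert, Finset.mem_singleton, ne_eq,
      reduceCtorEq, not_false_eq_true, true_and, V8.a.injEq, Fin.ext_iff, false_or] <;>
      simp [Fin.val_zero, Fin.val_one] <;>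
      omega
  | b i' j' => split_ifs <;> simp
  | v i' => split_ifs <;> simp
  | u i' => split_ifs <;> simp

open scoped Classical in
lemma nbr_u (k : Fin (m+1)) :
    (G8 m).neighborFinset (V8.u k) =
      if hk : k.1 < m then
        {V8.b k 0, V8.b k 1, V8.b ⟨k.1+1, by omega⟩ 0, V8.b ⟨k.1+1, by omega⟩ 1}
      else {V8.b k 0, V8.b k 1} := by
  ext w
  rw [SimpleGraph.mem_neighborFinset, adj_iff]
  cases w with
  | b i' j' =>
    have h2 := j'.isLt
    have hk2 := k.isLt
    have hi2 := i'.isLt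
    split_ifs with h0 <;> simp only [Finset.mem_insert, Finset.mem_singleton, ne_eq,
      reduceCtorEq, not_false_eq_true, true_and, V8.b.injEq, Fin.ext_iff, false_or] <;>
      simp [Fin.val_zero, Fin.val_one] <;>
      omega
  | a i' j' => split_ifs <;> simp
  | v i' => split_ifs <;> simp
  | u i' => split_ifs <;> simp
def W8 (m : ℕ) : V8 m → ℕ := fun x =>
  match x with
  | .a i j => if i.1 = 0 then 3 + j.1 else 7 + 4*i.1 + 4*m + 8*m*j.1
  | .b i j => if i.1 = 0 then 1 + j.1 else 7 + 4*i.1 + 8*m*j.1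
  | .v k => if k.1 = 0 then 17 + 8*m else if k.1 = m then 8 + 12*m else 18 + 8*k.1 + 16*m
  | .u k => if k.1 = 0 then 13 + 4*m else if k.1 = m then 8 + 8*m else 18 + 8*k.1 + 8*m

lemma f8_va (k i : Fin (m+1)) (j : Fin 2) :
    f8 m s(V8.v k, V8.a i j) = f8 m s(V8.a i j, V8.v k) := by rw [Sym2.eq_swap]

lemma f8_ub (k i : Fin (m+1)) (j : Fin 2) :
    f8 m s(V8.u k, V8.b i j) = f8 m s(V8.b i j, V8.u k) := by rw [Sym2.eq_swap]

lemma vs_eq (hm : 1 ≤ m) (x : V8 m) :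
    vertexSum (G8 m) (f8 m) x = W8 m x := by
  cases x with
  | a i j =>
    rw [vertexSum_eq_nbrs, nbr_a]
    by_cases h0 : i.1 = 0
    · rw [if_pos h0, Finset.sum_singleton, f8_av_fwd0 _ _ h0]
      simp only [W8, if_pos h0]
    · rw [if_neg h0, Finset.sum_pair (by simp [Fin.ext_iff] <;> omega),
        f8_av_fwd _ _ h0, f8_av_bwd _ _ _ (by simp <;> omega)]
      simp only [W8, if_neg h0]
      obtain hj | hj : j.1 = 0 ∨ j.1 = 1 := by omega
      all_goals rw [hj]
      all_goals omega
  | b i j =>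
    rw [vertexSum_eq_nbrs, nbr_b]
    by_cases h0 : i.1 = 0
    · rw [if_pos h0, Finset.sum_singleton, f8_bu_fwd0 _ _ h0]
      simp only [W8, if_pos h0]
    · rw [if_neg h0, Finset.sum_pair (by simp [Fin.ext_iff] <;> omega),
        f8_bu_fwd _ _ h0, f8_bu_bwd _ _ _ (by simp <;> omega)]
      simp only [W8, if_neg h0]
      obtain hj | hj : j.1 = 0 ∨ j.1 = 1 := by omega
      all_goals rw [hj]
      all_goals omega
  | v k =>
    rw [vertexSum_eq_nbrs, nbr_v]
    by_cases hk : k.1 < m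
    · rw [dif_pos hk, Finset.sum_insert (by simp [Fin.ext_iff] <;> omega),
        Finset.sum_insert (by simp [Fin.ext_iff] <;> omega),
        Finset.sum_pair (by simp [Fin.ext_iff] <;> omega)]
      simp only [f8_va]
      by_cases h0 : k.1 = 0
      · rw [f8_av_fwd0 k 0 h0, f8_av_fwd0 k 1 h0,
          f8_av_bwd ⟨k.1+1, by omega⟩ k 0 (by simp),
          f8_av_bwd ⟨k.1+1, by omega⟩ k 1 (by simp)]
        simp only [W8, if_pos h0]
        simp
        omega
      · rw [f8_av_fwd k 0 h0, f8_av_fwd k 1 h0,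
          f8_av_bwd ⟨k.1+1, by omega⟩ k 0 (by simp),
          f8_av_bwd ⟨k.1+1, by omega⟩ k 1 (by simp)]
        simp only [W8, if_neg h0, if_neg (by omega : ¬ k.1 = m)]
        simp
        omega
    · rw [dif_neg hk, Finset.sum_pair (by simp [Fin.ext_iff] <;> omega)]
      simp only [f8_va]
      have h0 : ¬ k.1 = 0 := by have := k.isLt; omega
      rw [f8_av_fwd k 0 h0, f8_av_fwd k 1 h0]
      have hkm : k.1 = m := by have := k.isLt; omega
      simp only [W8, if_neg h0, if_pos hkm]
      simp
      omega
  | u k =>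
    rw [vertexSum_eq_nbrs, nbr_u]
    by_cases hk : k.1 < m
    · rw [dif_pos hk, Finset.sum_insert (by simp [Fin.ext_iff] <;> omega),
        Finset.sum_insert (by simp [Fin.ext_iff] <;> omega),
        Finset.sum_pair (by simp [Fin.ext_iff] <;> omega)]
      simp only [f8_ub]
      by_cases h0 : k.1 = 0
      · rw [f8_bu_fwd0 k 0 h0, f8_bu_fwd0 k 1 h0,
          f8_bu_bwd ⟨k.1+1, by omega⟩ k 0 (by simp),
          f8_bu_bwd ⟨k.1+1, by omega⟩ k 1 (by simp)]
        simp only [W8, if_pos h0]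
        simp
        omega
      · rw [f8_bu_fwd k 0 h0, f8_bu_fwd k 1 h0,
          f8_bu_bwd ⟨k.1+1, by omega⟩ k 0 (by simp),
          f8_bu_bwd ⟨k.1+1, by omega⟩ k 1 (by simp)]
        simp only [W8, if_neg h0, if_neg (by omega : ¬ k.1 = m)]
        simp
        omega
    · rw [dif_neg hk, Finset.sum_pair (by simp [Fin.ext_iff] <;> omega)]
      simp only [f8_ub]
      have h0 : ¬ k.1 = 0 := by have := k.isLt; omega
      rw [f8_bu_fwd k 0 h0, f8_bu_fwd k 1 h0]
      have hkm : k.1 = m := by have := k.isLt; omega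
      simp only [W8, if_neg h0, if_pos hkm]
      simp
      omega
lemma W8_inj (hm : 1 ≤ m) : Function.Injective (W8 m) := by
  intro x y h
  cases x <;> cases y <;> simp only [W8] at h
  case a.a i j i' j' =>
    have h1 := i.isLt; have h2 := i'.isLt
    obtain hj|hj : j.1 = 0 ∨ j.1 = 1 := by have := j.isLt; omega
    all_goals obtain hj'|hj' : j'.1 = 0 ∨ j'.1 = 1 := by have := j'.isLt; omega
    all_goals simp only [hj, hj'] at h
    all_goals split_ifs at h <;> simp only [V8.a.injEq, Fin.ext_iff] <;>
      exact ⟨by omega, by omega⟩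
  case b.b i j i' j' =>
    have h1 := i.isLt; have h2 := i'.isLt
    obtain hj|hj : j.1 = 0 ∨ j.1 = 1 := by have := j.isLt; omega
    all_goals obtain hj'|hj' : j'.1 = 0 ∨ j'.1 = 1 := by have := j'.isLt; omega
    all_goals simp only [hj, hj'] at h
    all_goals split_ifs at h <;> simp only [V8.b.injEq, Fin.ext_iff] <;>
      exact ⟨by omega, by omega⟩
  case v.v k k' =>
    have h1 := k.isLt; have h2 := k'.isLt
    split_ifs at h <;> simp only [V8.v.injEq, Fin.ext_iff] <;> omega
  case u.u k k' =>
    have h1 := k.isLt; have h2 := k'.isLt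
    split_ifs at h <;> simp only [V8.u.injEq, Fin.ext_iff] <;> omega
  case a.b i j i' j' =>
    exfalso
    have h1 := i.isLt; have h2 := i'.isLt
    obtain hj|hj : j.1 = 0 ∨ j.1 = 1 := by have := j.isLt; omega <;>
      skip
    all_goals obtain hj'|hj' : j'.1 = 0 ∨ j'.1 = 1 := by have := j'.isLt; omega
    all_goals simp only [hj, hj'] at h
    all_goals split_ifs at h <;> omega
  case b.a i j i' j' =>
    exfalso
    have h1 := i.isLt; have h2 := i'.isLt
    obtain hj|hj : j.1 = 0 ∨ j.1 = 1 := by have := j.isLt; omega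
    all_goals obtain hj'|hj' : j'.1 = 0 ∨ j'.1 = 1 := by have := j'.isLt; omega
    all_goals simp only [hj, hj'] at h
    all_goals split_ifs at h <;> omega
  case a.v i j k =>
    exfalso
    have h1 := i.isLt; have h2 := k.isLt
    obtain hj|hj : j.1 = 0 ∨ j.1 = 1 := by have := j.isLt; omega
    all_goals simp only [hj] at h
    all_goals split_ifs at h <;> omega
  case v.a k i j =>
    exfalso
    have h1 := i.isLt; have h2 := k.isLt
    obtain hj|hj : j.1 = 0 ∨ j.1 = 1 := by have := j.isLt; omega
    all_goals simp only [hj] at h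
    all_goals split_ifs at h <;> omega
  case a.u i j k =>
    exfalso
    have h1 := i.isLt; have h2 := k.isLt
    obtain hj|hj : j.1 = 0 ∨ j.1 = 1 := by have := j.isLt; omega
    all_goals simp only [hj] at h
    all_goals split_ifs at h <;> omega
  case u.a k i j =>
    exfalso
    have h1 := i.isLt; have h2 := k.isLt
    obtain hj|hj : j.1 = 0 ∨ j.1 = 1 := by have := j.isLt; omega
    all_goals simp only [hj] at h
    all_goals split_ifs at h <;> omega
  case b.v i j k =>
    exfalso
    have h1 := i.isLt; have h2 := k.isLt
    obtain hj|hj : j.1 = 0 ∨ j.1 = 1 := by have := j.isLt; omega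
    all_goals simp only [hj] at h
    all_goals split_ifs at h <;> omega
  case v.b k i j =>
    exfalso
    have h1 := i.isLt; have h2 := k.isLt
    obtain hj|hj : j.1 = 0 ∨ j.1 = 1 := by have := j.isLt; omega
    all_goals simp only [hj] at h
    all_goals split_ifs at h <;> omega
  case b.u i j k =>
    exfalso
    have h1 := i.isLt; have h2 := k.isLt
    obtain hj|hj : j.1 = 0 ∨ j.1 = 1 := by have := j.isLt; omega
    all_goals simp only [hj] at h
    all_goals split_ifs at h <;> omega
  case u.b k i j =>
    exfalso
    have h1 := i.isLt; have h2 := k.isLt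
    obtain hj|hj : j.1 = 0 ∨ j.1 = 1 := by have := j.isLt; omega
    all_goals simp only [hj] at h
    all_goals split_ifs at h <;> omega
  case v.u k k' =>
    exfalso
    have h1 := k.isLt; have h2 := k'.isLt
    split_ifs at h <;> omega
  case u.v k k' =>
    exfalso
    have h1 := k.isLt; have h2 := k'.isLt
    split_ifs at h <;> omega
def L (m t i j k : ℕ) : ℕ :=
  if k = i then
    (if i = 0 then 1 + 2*t + j else 4 + 2*i + 2*m*(2*j + t))
  else 3 + 2*i + 2*m*(2*j + t)

lemma f8_eq_L_a (i k : Fin (m+1)) (j : Fin 2) (h : k = i ∨ i.1 = k.1 + 1) :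
    f8 m s(V8.a i j, V8.v k) = L m 1 i.1 j.1 k.1 := by
  have e1 : 2 * m * (2 * (j.1 + 1) - 1) = 2 * m * (2 * j.1 + 1) := by
    congr 1
  rcases h with hk | h
  · rw [hk]
    by_cases h0 : i.1 = 0
    · rw [f8_av_fwd0 _ _ h0]
      simp [L, h0]
      try omega
    · rw [f8_av_fwd _ _ h0, e1]
      simp [L, h0]
  · rw [f8_av_bwd _ _ _ h, e1]
    simp only [L, if_neg (by omega : ¬ (k.1 = i.1))]

lemma f8_eq_L_b (i k : Fin (m+1)) (j : Fin 2) (h : k = i ∨ i.1 = k.1 + 1) :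
    f8 m s(V8.b i j, V8.u k) = L m 0 i.1 j.1 k.1 := by
  have e1 : 4 * m * j.1 = 2 * m * (2 * j.1 + 0) := by ring
  rcases h with hk | h
  · rw [hk]
    by_cases h0 : i.1 = 0
    · rw [f8_bu_fwd0 _ _ h0]
      simp [L, h0]
      try omega
    · rw [f8_bu_fwd _ _ h0, e1]
      simp [L, h0]
  · rw [f8_bu_bwd _ _ _ h, e1]
    simp only [L, if_neg (by omega : ¬ (k.1 = i.1))]

lemma L_bounds (t i j k : ℕ) (hik : k = i ∨ i = k + 1)
    (hi : i ≤ m) (hj : j ≤ 1) (ht : t ≤ 1) :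
    1 ≤ L m t i j k ∧ L m t i j k ≤ 8*m + 4 := by
  obtain rfl | rfl : j = 0 ∨ j = 1 := by omega
  all_goals obtain rfl | rfl : t = 0 ∨ t = 1 := by omega
  all_goals simp only [L] <;> split_ifs <;> omega

lemma L_inj (t i j k t' i' j' k' : ℕ)
    (hik : k = i ∨ i = k + 1) (hik' : k' = i' ∨ i' = k' + 1)
    (hi : i ≤ m) (hi' : i' ≤ m) (hj : j ≤ 1) (hj' : j' ≤ 1)
    (ht : t ≤ 1) (ht' : t' ≤ 1)
    (h : L m t i j k = L m t' i' j' k') :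
    t = t' ∧ i = i' ∧ j = j' ∧ k = k' := by
  obtain rfl | rfl : j = 0 ∨ j = 1 := by omega
  all_goals obtain rfl | rfl : j' = 0 ∨ j' = 1 := by omega
  all_goals obtain rfl | rfl : t = 0 ∨ t = 1 := by omega
  all_goals obtain rfl | rfl : t' = 0 ∨ t' = 1 := by omega
  all_goals simp only [L] at h <;> split_ifs at h <;> omega

lemma L_surj (n : ℕ) (h1 : 1 ≤ n) (h2 : n ≤ 8*m + 4) :
    ∃ t i j k : ℕ, (k = i ∨ i = k + 1) ∧ i ≤ m ∧ k ≤ m ∧ j ≤ 1 ∧ t ≤ 1 ∧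
      L m t i j k = n := by
  rcases le_or_gt n 2 with h | h
  · exact ⟨0, 0, n - 1, 0, Or.inl rfl, by omega, by omega, by omega, by omega, by
      simp only [L]; split_ifs <;> omega⟩
  rcases le_or_gt n 4 with h3 | h3
  · exact ⟨1, 0, n - 3, 0, Or.inl rfl, by omega, by omega, by omega, by omega, by
      simp only [L]; split_ifs <;> omega⟩
  rcases le_or_gt n (2*m+4) with h4 | h4
  · rcases Nat.even_or_odd n with he | he
    · exact ⟨0, (n-4)/2, 0, (n-4)/2, Or.inl rfl, by omega, by omega, by omega, by omega, by
        simp only [L]; rcases he with ⟨c, hc⟩; split_ifs <;> omega⟩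
    · exact ⟨0, (n-3)/2, 0, (n-3)/2 - 1, Or.inr (by omega), by omega, by omega, by omega, by omega, by
        simp only [L]; rcases he with ⟨c, hc⟩; split_ifs <;> omega⟩
  rcases le_or_gt n (4*m+4) with h5 | h5
  · rcases Nat.even_or_odd n with he | he
    · exact ⟨1, (n-4-2*m)/2, 0, (n-4-2*m)/2, Or.inl rfl, by omega, by omega, by omega, by omega, by
        simp only [L]; rcases he with ⟨c, hc⟩; split_ifs <;> omega⟩
    · exact ⟨1, (n-3-2*m)/2, 0, (n-3-2*m)/2 - 1, Or.inr (by omega), by omega, by omega, by omega, by omega, by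
        simp only [L]; rcases he with ⟨c, hc⟩; split_ifs <;> omega⟩
  rcases le_or_gt n (6*m+4) with h6 | h6
  · rcases Nat.even_or_odd n with he | he
    · exact ⟨0, (n-4-4*m)/2, 1, (n-4-4*m)/2, Or.inl rfl, by omega, by omega, by omega, by omega, by
        simp only [L]; rcases he with ⟨c, hc⟩; split_ifs <;> omega⟩
    · exact ⟨0, (n-3-4*m)/2, 1, (n-3-4*m)/2 - 1, Or.inr (by omega), by omega, by omega, by omega, by omega, by
        simp only [L]; rcases he with ⟨c, hc⟩; split_ifs <;> omega⟩
  rcases Nat.even_or_odd n with he | he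
  · exact ⟨1, (n-4-6*m)/2, 1, (n-4-6*m)/2, Or.inl rfl, by omega, by omega, by omega, by omega, by
      simp only [L]; rcases he with ⟨c, hc⟩; split_ifs <;> omega⟩
  · exact ⟨1, (n-3-6*m)/2, 1, (n-3-6*m)/2 - 1, Or.inr (by omega), by omega, by omega, by omega, by omega, by
      simp only [L]; rcases he with ⟨c, hc⟩; split_ifs <;> omega⟩
lemma f8_bijOn (hm : 1 ≤ m) :
    Set.BijOn (f8 m) (G8 m).edgeSet (Set.Icc 1 (8 * m + 4)) := by
  refine ⟨?_, ?_, ?_⟩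
  · intro e he
    obtain ⟨i, k, j, hv, rfl | rfl⟩ := edge_cases he
    · have hv' : k.1 = i.1 ∨ i.1 = k.1 + 1 := by
        rcases hv with h | h
        exacts [Or.inl (by rw [h]), Or.inr h]
      rw [Set.mem_Icc, f8_eq_L_a _ _ _ hv]
      exact L_bounds 1 i.1 j.1 k.1 hv' (by omega) (by omega) le_rfl
    · have hv' : k.1 = i.1 ∨ i.1 = k.1 + 1 := by
        rcases hv with h | h
        exacts [Or.inl (by rw [h]), Or.inr h]
      rw [Set.mem_Icc, f8_eq_L_b _ _ _ hv]
      exact L_bounds 0 i.1 j.1 k.1 hv' (by omega) (by omega) (by omega)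
  · intro e1 h1 e2 h2 heq
    obtain ⟨i, k, j, hv, rfl | rfl⟩ := edge_cases h1 <;>
      obtain ⟨i', k', j', hv', rfl | rfl⟩ := edge_cases h2
    all_goals
      have hw : k.1 = i.1 ∨ i.1 = k.1 + 1 := by
        rcases hv with h | h
        exacts [Or.inl (by rw [h]), Or.inr h]
    all_goals
      have hw' : k'.1 = i'.1 ∨ i'.1 = k'.1 + 1 := by
        rcases hv' with h | h
        exacts [Or.inl (by rw [h]), Or.inr h]
    · rw [f8_eq_L_a _ _ _ hv, f8_eq_L_a _ _ _ hv'] at heq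
      obtain ⟨-, hi, hj, hk⟩ := L_inj _ _ _ _ _ _ _ _ hw hw'
        (by omega) (by omega) (by omega) (by omega) le_rfl le_rfl heq
      rw [Fin.ext hi, Fin.ext hj, Fin.ext hk]
    · rw [f8_eq_L_a _ _ _ hv, f8_eq_L_b _ _ _ hv'] at heq
      obtain ⟨ht, -, -, -⟩ := L_inj _ _ _ _ _ _ _ _ hw hw'
        (by omega) (by omega) (by omega) (by omega) le_rfl (by omega) heq
      omega
    · rw [f8_eq_L_b _ _ _ hv, f8_eq_L_a _ _ _ hv'] at heq
      obtain ⟨ht, -, -, -⟩ := L_inj _ _ _ _ _ _ _ _ hw hw'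
        (by omega) (by omega) (by omega) (by omega) (by omega) le_rfl heq
      omega
    · rw [f8_eq_L_b _ _ _ hv, f8_eq_L_b _ _ _ hv'] at heq
      obtain ⟨-, hi, hj, hk⟩ := L_inj _ _ _ _ _ _ _ _ hw hw'
        (by omega) (by omega) (by omega) (by omega) (by omega) (by omega) heq
      rw [Fin.ext hi, Fin.ext hj, Fin.ext hk]
  · intro n hn
    rw [Set.mem_Icc] at hn
    obtain ⟨t, i, j, k, hik, hi, hk, hj, ht, hL⟩ := L_surj n hn.1 hn.2
    have hikF : (⟨k, by omega⟩ : Fin (m+1)) = ⟨i, by omega⟩ ∨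
        ((⟨i, by omega⟩ : Fin (m+1)) : ℕ) = (⟨k, by omega⟩ : Fin (m+1)).1 + 1 := by
      rcases hik with h | h
      exacts [Or.inl (Fin.ext h), Or.inr h]
    obtain rfl | rfl : t = 0 ∨ t = 1 := by omega
    · exact ⟨s(V8.b ⟨i, by omega⟩ ⟨j, by omega⟩, V8.u ⟨k, by omega⟩),
        mem_edge_bu _ _ _ hikF, by rw [f8_eq_L_b _ _ _ hikF]; exact hL⟩
    · exact ⟨s(V8.a ⟨i, by omega⟩ ⟨j, by omega⟩, V8.v ⟨k, by omega⟩),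
        mem_edge_av _ _ _ hikF, by rw [f8_eq_L_a _ _ _ hikF]; exact hL⟩

open scoped Classical in
lemma card_edges (hm : 1 ≤ m) : (G8 m).edgeFinset.card = 8 * m + 4 := by
  have h1 : ((G8 m).edgeSet).ncard = (Set.Icc 1 (8*m+4) : Set ℕ).ncard := by
    rw [← (f8_bijOn hm).image_eq, Set.ncard_image_of_injOn (f8_bijOn hm).injOn]
  rw [← SimpleGraph.coe_edgeFinset, Set.ncard_coe_finset] at h1
  rw [h1, ← Finset.coe_Icc, Set.ncard_coe_finset, Nat.card_Icc]
  omega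
end Test

/-- For every `m ≥ 1`, `K_{1,2} × P_{2m+2}` is antimagic: the explicit
labeling `f8 m` is a bijection from the edge set onto `{1, …, 8m+4}` with
pairwise distinct vertex sums. -/

theorem G8_antimagic (m : ℕ) (hm : 1 ≤ m) :
    IsAntimagic (G8 m) ∧
    Set.BijOn (f8 m) (G8 m).edgeSet (Set.Icc 1 (8 * m + 4)) ∧
    Function.Injective (vertexSum (G8 m) (f8 m)) := by
  classical
  have hinj : Function.Injective (vertexSum (G8 m) (f8 m)) := by
    have : vertexSum (G8 m) (f8 m) = W8 m := funext (vs_eq hm)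
    rw [this]
    exact W8_inj hm
  refine ⟨⟨f8 m, ?_, hinj⟩, f8_bijOn hm, hinj⟩
  rw [card_edges hm]
  exact f8_bijOn hm
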